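/- arXiv:2407.13824 — 6 statements merged into one kernel-verified Lean document; each statement's English description precedes it below -/
import Mathlib

section
/- Let G be a finitely generated group with trivial centre, let π : Aut(G) → Out(G) be the natural quotient map, let H be a subgroup of Out(G), and let H̃ = π⁻¹(H) ≤ Aut(G). Let α ∈ Aut(G). Suppose that: (1) there exists x ∈ G such that α(x) ≠ h(x) for all h ∈ H̃; and (2) H̃ is conjugacy separable. Then there exists a finite group Q and a group homomorphism q : Out(G) → Q such that q(π(α)) does not lie in the image q(H). -/
section Preamble

variable (G : Type*) [Group G]

/-- The subgroup of inner automorphisms of `G`, i.e. the image of `G → Aut(G)`,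
`x ↦ (g ↦ x * g * x⁻¹)`. -/
def Inn : Subgroup (MulAut G) := (MulAut.conj : G →* MulAut G).range

instance Inn.normal : (Inn G).Normal := by
  constructor
  rintro _ ⟨g, rfl⟩ f
  refine ⟨f g, ?_⟩
  ext x
  simp [MulAut.conj, mul_assoc]

/-- The outer automorphism group of `G`: the quotient `Aut(G)/Inn(G)`. -/
def Out : Type _ := MulAut G ⧸ Inn G

instance : Group (Out G) := inferInstanceAs (Group (MulAut G ⧸ Inn G))

/-- The natural quotient map `π : Aut(G) → Out(G)`. -/
def outQuot : MulAut G →* Out G := QuotientGroup.mk' (Inn G)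

/-- A subgroup `H ≤ K` is separable if every element of `K` outside of `H` can be
separated from `H` in a finite quotient of `K`. -/
def Subgroup.SeparableSub {K : Type*} [Group K] (H : Subgroup K) : Prop :=
  ∀ g ∉ H, ∃ (Q : Type) (_ : Group Q) (_ : Finite Q) (q : K →* Q), q g ∉ H.map q

/-- A group `K` is conjugacy separable if any two non-conjugate elements remain
non-conjugate in some finite quotient. -/
def ConjugacySeparable (K : Type*) [Group K] : Prop :=
  ∀ g h : K, ¬ IsConj g h →
    ∃ (Q : Type) (_ : Group Q) (_ : Finite Q) (q : K →* Q),
      Function.Surjective q ∧ ¬ IsConj (q g) (q h)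

end Preamble

section Aux
variable {G : Type*} [Group G]

lemma aux_conj_conj (h : MulAut G) (g : G) :
    h * MulAut.conj g * h⁻¹ = MulAut.conj (h g) := by
  ext x
  simp [mul_assoc]

lemma aux_conj_inj (hZ : Subgroup.center G = ⊥) :
    Function.Injective (MulAut.conj : G →* MulAut G) := by
  intro a b hab
  have key : b⁻¹ * a ∈ Subgroup.center G := by
    rw [Subgroup.mem_center_iff]
    intro y
    have h1 : a * y * a⁻¹ = b * y * b⁻¹ := by
      have := congrFun (congrArg (fun e : MulAut G => (e : G → G)) hab) y
      simpa using this
    calc y * (b⁻¹ * a) = b⁻¹ * (b * y * b⁻¹) * a := by group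
      _ = b⁻¹ * (a * y * a⁻¹) * a := by rw [h1]
      _ = b⁻¹ * a * y := by group
  rw [hZ, Subgroup.mem_bot] at key
  have : b * (b⁻¹ * a) = b * 1 := by rw [key]
  simpa using this

lemma aux_finite_hom (Q : Type*) [Group Q] [Finite Q] [Group.FG G] : Finite (G →* Q) := by
  obtain ⟨S, hS⟩ := Group.fg_iff.mp ‹_›
  have hinj : Function.Injective (fun f : G →* Q => (fun s : S => f s)) := by
    intro f g h
    refine MonoidHom.eq_of_eqOn_dense hS.1 fun x hx => congrFun h ⟨x, hx⟩
  have : Finite (S → Q) := by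
    have := hS.2.to_subtype
    infer_instance
  exact Finite.of_injective _ hinj

end Aux

/-- **Proposition (Hagen–Sisto criterion).** Let `G` be a finitely generated group with
trivial centre, `H ≤ Out(G)`, `H̃ = π⁻¹(H) ≤ Aut(G)` and `α ∈ Aut(G)`. If (1) there is
`x ∈ G` with `α(x) ≠ h(x)` for all `h ∈ H̃`, and (2) `H̃` is conjugacy separable, then
there is a finite quotient `q : Out(G) → Q` with `q(π(α)) ∉ q(H)`. -/
theorem statement0 (G : Type*) [Group G] [Group.FG G]
    (hZ : Subgroup.center G = ⊥)
    (H : Subgroup (Out G)) (α : MulAut G)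
    (h1 : ∃ x : G, ∀ h ∈ H.comap (outQuot G), α x ≠ h x)
    (h2 : ConjugacySeparable ↥(H.comap (outQuot G))) :
    ∃ (Q : Type) (_ : Group Q) (_ : Finite Q) (q : Out G →* Q),
      q (outQuot G α) ∉ H.map q := by
  classical
  obtain ⟨x, hx⟩ := h1
  have hInn : ∀ g : G, MulAut.conj g ∈ H.comap (outQuot G) := by
    intro g
    have h0 : outQuot G (MulAut.conj g) = 1 :=
      (QuotientGroup.eq_one_iff _).mpr ⟨g, rfl⟩
    simp only [Subgroup.mem_comap, h0]
    exact H.one_mem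
  let ι : G →* ↥(H.comap (outQuot G)) :=
    (MulAut.conj : G →* MulAut G).codRestrict _ hInn
  have hnc : ¬ IsConj (ι x) (ι (α x)) := by
    rw [isConj_iff]
    rintro ⟨c, hc⟩
    have hc' : (c : MulAut G) * MulAut.conj x * (c : MulAut G)⁻¹ = MulAut.conj (α x) :=
      congrArg Subtype.val hc
    rw [aux_conj_conj] at hc'
    exact hx c c.2 (aux_conj_inj hZ hc').symm
  obtain ⟨Q', _, _, qt, hqs, hqnc⟩ := h2 _ _ hnc
  haveI : Finite (G →* Q') := aux_finite_hom Q'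
  let M : Subgroup G := ⨅ f : G →* Q', f.ker
  have hMmem : ∀ g : G, g ∈ M ↔ ∀ f : G →* Q', f g = 1 := by
    intro g
    simp [M, Subgroup.mem_iInf, MonoidHom.mem_ker]
  haveI : M.Normal := by
    constructor
    intro n hn g
    rw [hMmem] at hn ⊢
    intro f
    simp [hn f]
  haveI : M.FiniteIndex := Subgroup.finiteIndex_iInf fun f => inferInstance
  have hMmap : ∀ φ : MulAut G, M.map (φ : G →* G) = M := by
    intro φ
    ext y
    simp only [Subgroup.mem_map]
    constructor
    · rintro ⟨z, hz, rfl⟩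
      rw [hMmem] at hz ⊢
      intro f
      have := hz (f.comp (φ : G →* G))
      simpa using this
    · intro hy
      refine ⟨φ.symm y, ?_, by simp⟩
      rw [hMmem] at hy ⊢
      intro f
      have := hy (f.comp ((φ.symm : G ≃* G) : G →* G))
      simpa using this
  let F : MulAut G →* MulAut (G ⧸ M) :=
    { toFun := fun φ => QuotientGroup.congr M M (φ : G ≃* G) (hMmap φ)
      map_one' := by
        ext z
        refine QuotientGroup.induction_on z ?_
        intro g
        simp [QuotientGroup.congr_mk]
      map_mul' := by
        intro φ ψ
        ext z
        refine QuotientGroup.induction_on z ?_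
        intro g
        simp [QuotientGroup.congr_mk] }
  have hF_mk : ∀ (φ : MulAut G) (g : G), F φ ((g : G ⧸ M)) = ((φ g : G) : G ⧸ M) := by
    intro φ g
    simp [F, QuotientGroup.congr_mk]
  have hF_conj : ∀ g : G, F (MulAut.conj g) = MulAut.conj ((g : G ⧸ M)) := by
    intro g
    ext z
    refine QuotientGroup.induction_on z ?_
    intro y
    rw [hF_mk]
    simp
  let qbig : MulAut G →* Out (G ⧸ M) := (outQuot (G ⧸ M)).comp F
  have hker : ∀ a ∈ Inn G, qbig a = 1 := by
    rintro _ ⟨g, rfl⟩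
    show outQuot (G ⧸ M) (F (MulAut.conj g)) = 1
    rw [hF_conj]
    exact (QuotientGroup.eq_one_iff _).mpr ⟨_, rfl⟩
  let q : Out G →* Out (G ⧸ M) := QuotientGroup.lift (Inn G) qbig hker
  have hq_mk : ∀ β : MulAut G, q (outQuot G β) = qbig β := fun β => rfl
  -- key separation property
  have key : ∀ y ∈ H, q y ≠ q (outQuot G α) := by
    intro y hy hEq
    obtain ⟨β, rfl⟩ := QuotientGroup.mk'_surjective (Inn G) y
    have hβ : β ∈ H.comap (outQuot G) := hy
    have hEq' : qbig β = qbig α := hEq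
    have hmem' : (F β)⁻¹ * F α ∈ Inn (G ⧸ M) := by
      have : ((F β : MulAut (G ⧸ M)) : MulAut (G ⧸ M) ⧸ Inn (G ⧸ M))
          = ((F α : MulAut (G ⧸ M)) : MulAut (G ⧸ M) ⧸ Inn (G ⧸ M)) := hEq'
      exact QuotientGroup.eq.mp this
    obtain ⟨gbar, hgbar⟩ := hmem'
    obtain ⟨g, rfl⟩ := QuotientGroup.mk_surjective gbar
    set h' : MulAut G := β * MulAut.conj g with hh'
    have hFh' : F h' = F α := by
      rw [hh', map_mul, hF_conj, hgbar]
      group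
    have hmod : ∀ f : G →* Q', f (h' x) = f (α x) := by
      intro f
      have h5 : ((h' x : G) : G ⧸ M) = ((α x : G) : G ⧸ M) := by
        rw [← hF_mk, ← hF_mk, hFh']
      have h6 : (h' x)⁻¹ * α x ∈ M := QuotientGroup.eq.mp h5
      have h7 := (hMmem _).mp h6 f
      rw [map_mul, map_inv] at h7
      exact inv_mul_eq_one.mp h7
    have hmem : h' ∈ H.comap (outQuot G) := Subgroup.mul_mem _ hβ (hInn g)
    have hconj : (⟨h', hmem⟩ : ↥(H.comap (outQuot G))) * ι x *
        (⟨h', hmem⟩ : ↥(H.comap (outQuot G)))⁻¹ = ι (h' x) :=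
      Subtype.ext (aux_conj_conj _ _)
    have hfin : qt (ι (α x)) = qt (ι (h' x)) := (hmod (qt.comp ι)).symm
    apply hqnc
    rw [isConj_iff]
    refine ⟨qt ⟨h', hmem⟩, ?_⟩
    rw [← map_mul, ← map_inv, ← map_mul, hconj, ← hfin]
  -- transfer to a finite quotient in `Type`
  haveI : Finite (MulAut (G ⧸ M)) :=
    Finite.of_injective (fun e : MulAut (G ⧸ M) => (e : (G ⧸ M) → (G ⧸ M)))
      DFunLike.coe_injective
  haveI : Finite (Out (G ⧸ M)) := inferInstanceAs (Finite (MulAut (G ⧸ M) ⧸ Inn (G ⧸ M)))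
  obtain ⟨Q0, _, _, ⟨e⟩⟩ := Finite.exists_type_univ_nonempty_mulEquiv.{_, 0} (Out (G ⧸ M))
  refine ⟨Q0, inferInstance, inferInstance, e.toMonoidHom.comp q, ?_⟩
  rintro ⟨y, hy, hEq⟩
  exact key y hy (e.injective hEq)
end

section
/- Let G be a finitely generated group with trivial centre, let π : Aut(G) → Out(G) be the natural quotient map, let H be a subgroup of Out(G), and let H̃ = π⁻¹(H) ≤ Aut(G). Suppose that: (1) there exists γ ∈ Inn(G) such that the centraliser of γ in Aut(G) is the cyclic subgroup ⟨γ⟩ generated by γ; and (2) H̃ is conjugacy separable. Then H is a separable subgroup of Out(G). -/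
/-!
Let `γ = conj c` have centraliser `⟨γ⟩` in `Aut(G)` and let `α ∉ π⁻¹(H)`. Then `γ` and `αγα⁻¹` are
not conjugate in `π⁻¹(H)`: a conjugator `β` would make `α⁻¹β` centralise `γ`, so `α⁻¹β ∈ ⟨γ⟩ ≤ π⁻¹(H)`.
Conjugacy separability gives a finite quotient `q` of `π⁻¹(H)` keeping them apart. As `G` is finitely
generated, the finite-index subgroup `{x | q (conj x) = 1}` contains a characteristic finite-index
subgroup `M`, and the finite quotient `Out(G) → Out(G ⧸ M)` separates `π α` from `H`: otherwise some
`β ∈ π⁻¹(H)` agrees with `α` on `G ⧸ M`, and then `q` would conjugate `αγα⁻¹` to `γ`.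
-/

instance MonoidHom.finite_of_fg {M N : Type*} [Monoid M] [Monoid.FG M] [Monoid N] [Finite N] :
    Finite (M →* N) := by
  obtain ⟨S, hS, hSfin⟩ := Monoid.fg_iff.mp ‹Monoid.FG M›
  have : Finite S := hSfin
  exact Finite.of_injective (fun f : M →* N => fun s : S => f s) fun f g hfg =>
    MonoidHom.eq_of_eqOn_denseM hS fun x hx => congrFun hfg ⟨x, hx⟩

namespace Subgroup

variable {G : Type*} [Group G]

/-- The intersection of the kernels of all actions of `G` on `G ⧸ P`: there are finitely many,
and precomposing with an automorphism permutes them. -/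
theorem exists_characteristic_finiteIndex_le [Group.FG G] (P : Subgroup G) [P.FiniteIndex] :
    ∃ M : Subgroup G, M.Characteristic ∧ M.FiniteIndex ∧ M ≤ P := by
  refine ⟨⨅ f : G →* Equiv.Perm (G ⧸ P), f.ker, ?_, finiteIndex_iInf fun f => finiteIndex_ker f, ?_⟩
  · refine characteristic_iff_le_comap.mpr fun φ x hx => mem_iInf.mpr fun f => ?_
    exact mem_iInf.mp hx (f.comp φ.toMonoidHom)
  · calc ⨅ f : G →* Equiv.Perm (G ⧸ P), f.ker ≤ (MulAction.toPermHom G (G ⧸ P)).ker := iInf_le _ _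
      _ = P.normalCore := (normalCore_eq_ker P).symm
      _ ≤ P := normalCore_le P

theorem SeparableSub.of_finite_quotients.{v} {K : Type*} [Group K] {H : Subgroup K}
    (h : ∀ g ∉ H, ∃ (Q : Type v) (_ : Group Q) (_ : Finite Q) (q : K →* Q), q g ∉ H.map q) :
    H.SeparableSub := by
  intro g hg
  obtain ⟨Q, _, _, q, hq⟩ := h g hg
  have : Small.{0} Q := Countable.toSmall Q
  let e : Shrink.{0} Q ≃* Q := Shrink.mulEquiv
  refine ⟨Shrink.{0} Q, inferInstance, Finite.of_equiv Q (equivShrink Q), e.symm.toMonoidHom.comp q,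
    fun hmem => hq ?_⟩
  rw [← map_map] at hmem
  simpa using (mem_map_equiv (f := e.symm)).mp hmem

end Subgroup

theorem not_isConj_of_centralizer_eq_zpowers {A : Type*} [Group A] {K : Subgroup A} {γ α : A}
    (hcent : Subgroup.centralizer {γ} = Subgroup.zpowers γ) (hγ : γ ∈ K)
    (hαγ : α * γ * α⁻¹ ∈ K) (hα : α ∉ K) :
    ¬ IsConj (⟨γ, hγ⟩ : K) ⟨α * γ * α⁻¹, hαγ⟩ := by
  rw [isConj_iff]
  rintro ⟨⟨β, hβ⟩, hconj⟩
  have hβγ : β * γ * β⁻¹ = α * γ * α⁻¹ := congrArg Subtype.val hconj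
  have hcomm : α⁻¹ * β ∈ Subgroup.centralizer {γ} := by
    rw [Subgroup.mem_centralizer_singleton_iff]
    calc α⁻¹ * β * γ = α⁻¹ * (β * γ * β⁻¹) * β := by group
      _ = γ * (α⁻¹ * β) := by rw [hβγ]; group
  rw [hcent] at hcomm
  have hK : α⁻¹ * β ∈ K := Subgroup.zpowers_le.mpr hγ hcomm
  exact hα (by simpa using K.mul_mem hβ (K.inv_mem hK))

namespace MulAut

variable {G : Type*} [Group G]

theorem mul_conj_mul_inv (α : MulAut G) (x : G) : α * conj x * α⁻¹ = conj (α x) := by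
  ext y
  simp [mul_assoc]

def quotient (M : Subgroup G) [M.Characteristic] : MulAut G →* MulAut (G ⧸ M) where
  toFun α := QuotientGroup.congr M M α (Subgroup.characteristic_iff_map_eq.mp ‹_› α)
  map_one' := by
    ext x
    induction x using QuotientGroup.induction_on
    rfl
  map_mul' α β := by
    ext x
    induction x using QuotientGroup.induction_on
    rfl

variable (M : Subgroup G) [M.Characteristic]

@[simp]
theorem quotient_apply_mk (α : MulAut G) (x : G) :
    quotient M α (x : G ⧸ M) = (α x : G ⧸ M) :=
  rfl

@[simp]
theorem quotient_conj (x : G) : quotient M (conj x) = conj (x : G ⧸ M) := by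
  ext y
  induction y using QuotientGroup.induction_on
  simp

theorem inv_mul_apply_mem_of_quotient_eq_one {δ : MulAut G} (hδ : quotient M δ = 1) (x : G) :
    x⁻¹ * δ x ∈ M := by
  have h : quotient M δ (x : G ⧸ M) = x := by rw [hδ]; rfl
  exact QuotientGroup.eq.mp h.symm

end MulAut

instance {G : Type*} [Group G] [Finite G] : Finite (Out G) := Quotient.finite _

theorem inn_le_comap_outQuot {G : Type*} [Group G] (H : Subgroup (Out G)) :
    Inn G ≤ H.comap (outQuot G) :=
  (QuotientGroup.ker_mk' (Inn G)).symm.le.trans (MonoidHom.ker_le_comap _ H)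

namespace Out

variable {G : Type*} [Group G] (M : Subgroup G) [M.Characteristic]

def quotientMap : Out G →* Out (G ⧸ M) :=
  QuotientGroup.map (Inn G) (Inn (G ⧸ M)) (MulAut.quotient M) <| by
    rintro _ ⟨x, rfl⟩
    exact ⟨x, (MulAut.quotient_conj M x).symm⟩

/-- This works because `Inn(G ⧸ M)` is the image of `Inn(G)` under `MulAut.quotient M`. -/
theorem exists_quotient_eq_of_mem_map {H : Subgroup (Out G)} {α : MulAut G}
    (h : quotientMap M (outQuot G α) ∈ H.map (quotientMap M)) :
    ∃ β ∈ H.comap (outQuot G), MulAut.quotient M β = MulAut.quotient M α := by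
  obtain ⟨y, hy, hyα⟩ := h
  obtain ⟨β, rfl⟩ := QuotientGroup.mk'_surjective (Inn G) y
  obtain ⟨x', hx'⟩ : (MulAut.quotient M β)⁻¹ * MulAut.quotient M α ∈ Inn (G ⧸ M) :=
    QuotientGroup.eq.mp hyα
  obtain ⟨x, rfl⟩ := QuotientGroup.mk_surjective x'
  refine ⟨β * MulAut.conj x, (H.comap (outQuot G)).mul_mem hy (inn_le_comap_outQuot H ⟨x, rfl⟩), ?_⟩
  rw [map_mul, MulAut.quotient_conj, hx', mul_inv_cancel_left]

end Out

/-- If `β ∈ K` agrees with `α` modulo `M`, then `δ = β⁻¹ α` acts trivially on `G ⧸ M`, so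
`δ γ δ⁻¹ = conj (δ c) = γ · conj p` with `p = c⁻¹ · δ c ∈ M`, and `q` kills `conj p`. -/
theorem isConj_of_quotient_eq {G Q : Type*} [Group G] [Group Q] {K : Subgroup (MulAut G)}
    (hInn : Inn G ≤ K) (q : K →* Q) {M : Subgroup G} [M.Characteristic]
    (hM : M ≤ (q.comp ((MulAut.conj : G →* MulAut G).codRestrict K fun x => hInn ⟨x, rfl⟩)).ker)
    {α β : MulAut G} (hβ : β ∈ K) (hαβ : MulAut.quotient M β = MulAut.quotient M α) (c : G)
    (hαc : α * MulAut.conj c * α⁻¹ ∈ K) :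
    IsConj (q ⟨MulAut.conj c, hInn ⟨c, rfl⟩⟩) (q ⟨α * MulAut.conj c * α⁻¹, hαc⟩) := by
  set δ := β⁻¹ * α
  have hδ : MulAut.quotient M δ = 1 := by simp [δ, hαβ]
  set p := c⁻¹ * δ c
  have hqp : q ⟨MulAut.conj p, hInn ⟨p, rfl⟩⟩ = 1 :=
    hM (MulAut.inv_mul_apply_mem_of_quotient_eq_one M hδ c)
  have hconj : α * MulAut.conj c * α⁻¹ = β * (MulAut.conj c * MulAut.conj p) * β⁻¹ := by
    calc α * MulAut.conj c * α⁻¹ = β * (δ * MulAut.conj c * δ⁻¹) * β⁻¹ := by simp only [δ]; group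
      _ = β * (MulAut.conj c * MulAut.conj p) * β⁻¹ := by
        rw [MulAut.mul_conj_mul_inv, ← map_mul, mul_inv_cancel_left]
  have hconjK : (⟨α * MulAut.conj c * α⁻¹, hαc⟩ : K) =
      ⟨β, hβ⟩ * (⟨MulAut.conj c, hInn ⟨c, rfl⟩⟩ * ⟨MulAut.conj p, hInn ⟨p, rfl⟩⟩) * ⟨β, hβ⟩⁻¹ :=
    Subtype.ext hconj
  exact isConj_iff.mpr ⟨q ⟨β, hβ⟩, by rw [hconjK, map_mul, map_mul, map_mul, hqp, mul_one, map_inv]⟩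

theorem statement1_general (G : Type*) [Group G] [Group.FG G]
    (H : Subgroup (Out G))
    (h1 : ∃ γ ∈ Inn G, Subgroup.centralizer {γ} = Subgroup.zpowers γ)
    (h2 : ConjugacySeparable ↥(H.comap (outQuot G))) :
    H.SeparableSub := by
  obtain ⟨_, ⟨c, rfl⟩, hcent⟩ := h1
  have hInn : Inn G ≤ H.comap (outQuot G) := inn_le_comap_outQuot H
  refine Subgroup.SeparableSub.of_finite_quotients fun g hg => ?_
  obtain ⟨α, rfl⟩ := QuotientGroup.mk'_surjective (Inn G) g
  have hαc := hInn ((Inn.normal G).conj_mem _ ⟨c, rfl⟩ α)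
  obtain ⟨Q, _, _, q, -, hq⟩ :=
    h2 _ _ (not_isConj_of_centralizer_eq_zpowers hcent (hInn ⟨c, rfl⟩) hαc hg)
  obtain ⟨M, _, _, hM⟩ := Subgroup.exists_characteristic_finiteIndex_le
    (q.comp ((MulAut.conj : G →* MulAut G).codRestrict _ fun x => hInn ⟨x, rfl⟩)).ker
  refine ⟨Out (G ⧸ M), inferInstance, inferInstance, Out.quotientMap M, fun hmem => hq ?_⟩
  obtain ⟨β, hβ, hβα⟩ := Out.exists_quotient_eq_of_mem_map M hmem
  exact isConj_of_quotient_eq hInn q hM hβ hβα c hαc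

/-- **Corollary.** Let `G` be a finitely generated group with trivial centre and
`H ≤ Out(G)`. If (1) there is `γ ∈ Inn(G)` whose centraliser in `Aut(G)` is `⟨γ⟩`, and
(2) `H̃ = π⁻¹(H)` is conjugacy separable, then `H` is a separable subgroup of `Out(G)`. -/
theorem statement1 (G : Type*) [Group G] [Group.FG G]
    (hZ : Subgroup.center G = ⊥)
    (H : Subgroup (Out G))
    (h1 : ∃ γ ∈ Inn G, Subgroup.centralizer {γ} = Subgroup.zpowers γ)
    (h2 : ConjugacySeparable ↥(H.comap (outQuot G))) :
    H.SeparableSub :=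
  statement1_general G H h1 h2
end

section
/- Let G be a group with trivial centre and with the unique root property. Then Aut(G) has no non-trivial finite normal subgroups; that is, every finite normal subgroup of Aut(G) is the trivial subgroup. -/
/-!
For `φ` in a normal subgroup `N` of `Aut(G)` and `g : G`, the commutator of `φ` with the inner
automorphism of `g` is the inner automorphism of `φ g * g⁻¹`, so it lies in `N`. If `N` is finite,
this inner automorphism has finite order; as the centre is trivial, `g ↦ conj g` is injective, so
`φ g * g⁻¹` has finite order too, and unique roots make `G` torsion-free. Hence `φ g = g`.
-/

theorem isMulTorsionFree_of_pow_left_injective {M : Type*} [Monoid M]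
    (h : ∀ (x y : M) (n : ℕ), 1 ≤ n → x ^ n = y ^ n → x = y) : IsMulTorsionFree M :=
  ⟨fun _ hn x y hxy => h x y _ (Nat.one_le_iff_ne_zero.mpr hn) hxy⟩

open scoped commutatorElement

namespace MulAut

variable {G : Type*} [Group G]

theorem conj_eq_one_iff {g : G} : conj g = 1 ↔ g ∈ Subgroup.center G := by
  rw [Subgroup.mem_center_iff, MulEquiv.ext_iff]
  exact forall_congr' fun x => by rw [conj_apply, one_apply, mul_inv_eq_iff_eq_mul, eq_comm]

theorem conj_injective_of_center_eq_bot (hZ : Subgroup.center G = ⊥) :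
    Function.Injective (conj : G →* MulAut G) :=
  (injective_iff_map_eq_one _).mpr fun g hg => by
    simpa [hZ] using conj_eq_one_iff.mp hg

theorem conj_eq_mul_conj_mul_inv (φ : MulAut G) (g : G) : conj (φ g) = φ * conj g * φ⁻¹ := by
  ext h
  simp [mul_assoc]

theorem commutatorElement_conj (φ : MulAut G) (g : G) : ⁅φ, conj g⁆ = conj (φ g * g⁻¹) := by
  rw [commutatorElement_def, map_mul, map_inv, conj_eq_mul_conj_mul_inv]

theorem conj_apply_mul_inv_mem {N : Subgroup (MulAut G)} [N.Normal] {φ : MulAut G} (hφ : φ ∈ N)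
    (g : G) : conj (φ g * g⁻¹) ∈ N :=
  commutatorElement_conj φ g ▸
    Subgroup.commutator_le_left N ⊤ (Subgroup.commutator_mem_commutator hφ (Subgroup.mem_top _))

end MulAut

/-- **Lemma.** Let `G` be a group with trivial centre and with the unique root property
(`x ^ n = y ^ n` for some `n ≥ 1` implies `x = y`). Then `Aut(G)` has no non-trivial
finite normal subgroups: every finite normal subgroup of `Aut(G)` is trivial. -/
theorem statement2 (G : Type*) [Group G]
    (hZ : Subgroup.center G = ⊥)
    (hroot : ∀ (x y : G) (n : ℕ), 1 ≤ n → x ^ n = y ^ n → x = y)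
    (N : Subgroup (MulAut G)) (hN : N.Normal) (hfin : Finite N) :
    N = ⊥ := by
  have := isMulTorsionFree_of_pow_left_injective hroot
  refine (Subgroup.eq_bot_iff_forall N).mpr fun φ hφ => MulEquiv.ext fun g => ?_
  have hmem := MulAut.conj_apply_mul_inv_mem hφ g
  have hfinOrder : IsOfFinOrder (MulAut.conj (φ g * g⁻¹)) :=
    Submonoid.isOfFinOrder_coe.mpr (isOfFinOrder_of_finite (⟨_, hmem⟩ : N))
  exact mul_inv_eq_one.mp
    ((MulAut.conj_injective_of_center_eq_bot hZ).isOfFinOrder_iff.mp hfinOrder).eq_one'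
end

section
/- Let G be a group with trivial centre, let π : Aut(G) → Out(G) be the natural quotient map, let H be a subgroup of Out(G), and let H̃ = π⁻¹(H) ≤ Aut(G). Let x ∈ G be such that the centraliser in Aut(G) of the inner automorphism γ_x (conjugation by x) is exactly the cyclic subgroup ⟨γ_x⟩. Then for every α ∈ Aut(G) with α ∉ H̃, we have α(x) ≠ h(x) for all h ∈ H̃. -/
/-- Let `G` be a group with trivial centre, `H ≤ Out(G)` and `H̃ = π⁻¹(H) ≤ Aut(G)`.
Let `x ∈ G` be such that the centraliser in `Aut(G)` of the inner automorphism
`γ_x = MulAut.conj x` is exactly `⟨γ_x⟩`. Then every `α ∈ Aut(G)` with `α ∉ H̃`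
satisfies `α(x) ≠ h(x)` for all `h ∈ H̃`. -/
theorem statement4 (G : Type*) [Group G]
    (hZ : Subgroup.center G = ⊥)
    (H : Subgroup (Out G)) (x : G)
    (hc : Subgroup.centralizer {MulAut.conj x} = Subgroup.zpowers (MulAut.conj x))
    (α : MulAut G) (hα : α ∉ H.comap (outQuot G)) :
    ∀ h ∈ H.comap (outQuot G), α x ≠ h x := by
  intro h hh heq
  set β := h⁻¹ * α with hβ
  have hβx : β x = x := by
    simp [hβ, heq]
  have hcomm : β ∈ Subgroup.centralizer {MulAut.conj x} := by
    intro y hy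
    rcases Set.mem_singleton_iff.mp hy with rfl
    ext g
    simp only [MulAut.mul_apply, MulAut.conj_apply, map_mul, map_inv, hβx]
  rw [hc] at hcomm
  have hInn : β ∈ Inn G := by
    rcases hcomm with ⟨n, hn⟩
    exact ⟨x ^ n, by rw [map_zpow]; exact hn⟩
  have hβH : β ∈ H.comap (outQuot G) := by
    have : outQuot G β = 1 := (QuotientGroup.eq_one_iff β).mpr hInn
    simp [Subgroup.mem_comap, this, H.one_mem]
  exact hα (by simpa [hβ] using Subgroup.mul_mem _ hh hβH)
end

section
/- Let G be a group with trivial centre and let N be a finite normal subgroup of Aut(G). Then there exists a subgroup K of G of finite index such that every automorphism α ∈ N fixes every element of K, i.e., α(k) = k for all α ∈ N and all k ∈ K. -/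
/-- Let `G` be a group with trivial centre and let `N` be a finite normal subgroup of
`Aut(G)`. Then there is a finite index subgroup `K ≤ G` which is fixed pointwise by
every automorphism in `N`. -/
theorem statement6 (G : Type*) [Group G]
    (hZ : Subgroup.center G = ⊥)
    (N : Subgroup (MulAut G)) (hN : N.Normal) (hfin : Finite N) :
    ∃ K : Subgroup G, K.FiniteIndex ∧ ∀ α ∈ N, ∀ k ∈ K, α k = k := by
  -- conj is injective since the center is trivial
  have hconj_inj : Function.Injective (MulAut.conj : G →* MulAut G) := by
    intro a b hab
    have : a * b⁻¹ ∈ Subgroup.center G := by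
      rw [Subgroup.mem_center_iff]
      intro g
      have := congrArg (fun σ : MulAut G => σ g) hab
      simp only [MulAut.conj_apply] at this
      calc g * (a * b⁻¹) = a * (a⁻¹ * g * a) * b⁻¹ := by group
        _ = a * (b⁻¹ * g * b) * b⁻¹ := by
            congr 1
            have h2 := congrArg (fun σ : MulAut G => σ.symm g) hab
            simpa [MulAut.conj_symm_apply] using h2
        _ = a * b⁻¹ * g := by group
        _ = a * b⁻¹ * g := rfl
    rw [hZ, Subgroup.mem_bot] at this
    have : a = b := by
      have := mul_inv_eq_one.mp this
      exact this
    exact this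
  -- the homomorphism G → MulAut N, via conjugation of inner automorphisms on N
  have : Finite (MulAut N) := inferInstance
  let f : G →* MulAut N := (MulAut.conjNormal (H := N)).comp (MulAut.conj : G →* MulAut G)
  refine ⟨f.ker, inferInstance, ?_⟩
  intro α hα k hk
  -- from k ∈ ker f : for all β ∈ N, conj k * β * (conj k)⁻¹ = β
  have hker : ∀ β : N, MulAut.conj k * (β : MulAut G) * (MulAut.conj k)⁻¹ = β := by
    intro β
    have : f k = 1 := hk
    have h2 := congrArg (fun σ : MulAut N => (σ β : MulAut G)) this
    simpa [f, MulAut.conjNormal_apply] using h2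
  have h := hker ⟨α, hα⟩
  -- rearrange: α⁻¹ * conj k * α = conj k, i.e. conj (α⁻¹ k) = conj k
  have h3 : α⁻¹ * MulAut.conj k * α = MulAut.conj k := by
    calc α⁻¹ * MulAut.conj k * α
        = α⁻¹ * (MulAut.conj k * α * (MulAut.conj k)⁻¹) * MulAut.conj k := by group
      _ = α⁻¹ * α * MulAut.conj k := by rw [h]
      _ = MulAut.conj k := by group
  have h4 : MulAut.conj (α⁻¹ k) = MulAut.conj k := by
    ext x
    have := congrArg (fun σ : MulAut G => σ x) h3
    simpa [MulAut.conj_apply, mul_assoc, map_mul, map_inv] using this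
  have h5 : α⁻¹ k = k := hconj_inj h4
  calc α k = α (α⁻¹ k) := by rw [h5]
    _ = k := by simp
end

section
/- Let G be a group with the unique root property and let α ∈ Aut(G). Suppose there exists a subgroup K of G of finite index such that α(k) = k for all k ∈ K. Then α is the identity automorphism of G. -/
/-- Let `G` be a group with the unique root property and `α ∈ Aut(G)`. If some finite
index subgroup `K ≤ G` is fixed pointwise by `α`, then `α` is the identity. -/
theorem statement8 (G : Type*) [Group G]
    (hroot : ∀ (x y : G) (n : ℕ), 1 ≤ n → x ^ n = y ^ n → x = y)
    (α : MulAut G)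
    (h : ∃ K : Subgroup G, K.FiniteIndex ∧ ∀ k ∈ K, α k = k) :
    α = 1 := by
  obtain ⟨K, hK, hfix⟩ := h
  haveI := hK
  haveI : K.normalCore.FiniteIndex := K.finiteIndex_normalCore
  ext x
  have hmem : x ^ K.normalCore.index ∈ K.normalCore := Subgroup.pow_index_mem _ x
  have h1 : α (x ^ K.normalCore.index) = x ^ K.normalCore.index :=
    hfix _ (K.normalCore_le hmem)
  rw [map_pow] at h1
  exact hroot _ _ _ (Nat.one_le_iff_ne_zero.mpr Subgroup.FiniteIndex.index_ne_zero) h1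
end
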